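/- arXiv:1706.09914 — 2 statements merged into one kernel-verified Lean document; each statement's English description precedes it below -/
import Mathlib

section
/- There exists a constant c_{Z̄} ∈ (0,∞), depending only on L and k, such that for every r ∈ 𝒮 and every j ∈ ℕ₀, one has Z̄(j,r) ≤ c_{Z̄} · (r_{j−1} + r_j). -/
noncomputable section

open scoped BigOperators

/-- Tail sum `Σ_{m=j+1}^∞ r m`. -/
def tsumTail (r : ℕ → ℝ) (j : ℕ) : ℝ := ∑' m : ℕ, r (j + 1 + m)

/-- Membership in `𝒮`: nonnegative summable sequences with total mass 1. -/
def memS (r : ℕ → ℝ) : Prop := (∀ j, 0 ≤ r j) ∧ Summable r ∧ ∑' j, r j = 1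

/-- `prevR r j = r_{j−1}` with the convention `r_{−1} = 0`. -/
def prevR (r : ℕ → ℝ) : ℕ → ℝ
  | 0 => 0
  | (j + 1) => r j

/-- The limiting quadratic-variation rate `Z̄(j, r)`. -/
def ZbarR (L k : ℕ) (j : ℕ) (r : ℕ → ℝ) : ℝ :=
  ∑ i₁ ∈ Finset.range k, ((∑ m ∈ Finset.range j, r m) ^ i₁ / (i₁.factorial : ℝ)) *
    ∑ i₂ ∈ Finset.range (L - i₁ + 1), (prevR r j ^ i₂ / (i₂.factorial : ℝ)) *
      ∑ i₃ ∈ Finset.range (L - i₁ - i₂ + 1),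
        ((min i₂ (k - i₁) : ℝ) - (min i₃ (k - i₁ - i₂) : ℝ)) ^ 2 *
          (r j ^ i₃ / (i₃.factorial : ℝ)) *
          ((tsumTail r j) ^ (L - i₁ - i₂ - i₃) / ((L - i₁ - i₂ - i₃).factorial : ℝ))

lemma perTerm (L k i₁ i₂ i₃ : ℕ) (hkL : k ≤ L)
    (hi₁ : i₁ < k) (hi₂ : i₂ ≤ L - i₁) (hi₃ : i₃ ≤ L - i₁ - i₂) (p q s t : ℝ)
    (hp0 : 0 ≤ p) (hp1 : p ≤ 1) (hq0 : 0 ≤ q) (hq1 : q ≤ 1)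
    (hs0 : 0 ≤ s) (hs1 : s ≤ 1) (ht0 : 0 ≤ t) (ht1 : t ≤ 1) :
    p ^ i₁ / (i₁.factorial : ℝ) *
      (q ^ i₂ / (i₂.factorial : ℝ) *
        (((min i₂ (k - i₁) : ℝ) - (min i₃ (k - i₁ - i₂) : ℝ)) ^ 2 *
          (s ^ i₃ / (i₃.factorial : ℝ)) *
          (t ^ (L - i₁ - i₂ - i₃) / ((L - i₁ - i₂ - i₃).factorial : ℝ)))) ≤
      (2 * (L : ℝ)) ^ 2 * (q + s) := by
  have hqsnn : (0:ℝ) ≤ q + s := by linarith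
  have hRHS : (0:ℝ) ≤ (2 * (L : ℝ)) ^ 2 * (q + s) :=
    mul_nonneg (by positivity) hqsnn
  have hkLR : (k:ℝ) ≤ (L:ℝ) := by exact_mod_cast hkL
  have hi₁R : (i₁:ℝ) + 1 ≤ (k:ℝ) := by exact_mod_cast Nat.succ_le_of_lt hi₁
  have hi₁0 : (0:ℝ) ≤ (i₁:ℝ) := Nat.cast_nonneg _
  have hi₂0 : (0:ℝ) ≤ (i₂:ℝ) := Nat.cast_nonneg _
  have hi₃0 : (0:ℝ) ≤ (i₃:ℝ) := Nat.cast_nonneg _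
  have hi12 : i₁ + i₂ ≤ L := by omega
  have hi12R : (i₁:ℝ) + (i₂:ℝ) ≤ (L:ℝ) := by exact_mod_cast hi12
  have hi3L : i₃ ≤ L := by omega
  have hi3LR : (i₃:ℝ) ≤ (L:ℝ) := by exact_mod_cast hi3L
  by_cases h23 : i₂ = 0 ∧ i₃ = 0
  · obtain ⟨h2, h3⟩ := h23
    subst h2; subst h3
    have h0 : (0:ℝ) ≤ (k:ℝ) - (i₁:ℝ) := by linarith
    simp only [Nat.cast_zero, sub_zero, pow_zero]
    rw [min_eq_left h0]
    simp only [sub_self, ne_eq, OfNat.ofNat_ne_zero, not_false_eq_true, zero_pow,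
      zero_mul, mul_zero]
    exact hRHS
  · -- general bounds
    have hfac : ∀ n : ℕ, (1:ℝ) ≤ (n.factorial : ℝ) := by
      intro n; exact_mod_cast n.factorial_pos
    have hA : p ^ i₁ / (i₁.factorial : ℝ) ≤ 1 := by
      rw [div_le_one (by exact_mod_cast i₁.factorial_pos)]
      exact le_trans (pow_le_one₀ hp0 hp1) (hfac i₁)
    have hB : q ^ i₂ / (i₂.factorial : ℝ) ≤ q ^ i₂ :=
      div_le_self (by positivity) (hfac i₂)
    have hC : s ^ i₃ / (i₃.factorial : ℝ) ≤ s ^ i₃ :=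
      div_le_self (by positivity) (hfac i₃)
    have hC0 : 0 ≤ s ^ i₃ / (i₃.factorial : ℝ) := by positivity
    have hE : t ^ (L - i₁ - i₂ - i₃) / ((L - i₁ - i₂ - i₃).factorial : ℝ) ≤ 1 := by
      rw [div_le_one (by exact_mod_cast (L - i₁ - i₂ - i₃).factorial_pos)]
      exact le_trans (pow_le_one₀ ht0 ht1) (hfac _)
    have hm1a : (0:ℝ) ≤ min (i₂:ℝ) ((k:ℝ) - (i₁:ℝ)) := le_min hi₂0 (by linarith)
    have hm1b : min (i₂:ℝ) ((k:ℝ) - (i₁:ℝ)) ≤ (L:ℝ) :=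
      le_trans (min_le_right _ _) (by linarith)
    have hm2a : -(L:ℝ) ≤ min (i₃:ℝ) ((k:ℝ) - (i₁:ℝ) - (i₂:ℝ)) :=
      le_min (by linarith) (by linarith)
    have hm2b : min (i₃:ℝ) ((k:ℝ) - (i₁:ℝ) - (i₂:ℝ)) ≤ (L:ℝ) :=
      le_trans (min_le_left _ _) hi3LR
    have hD : (min (i₂:ℝ) ((k:ℝ) - (i₁:ℝ)) - min (i₃:ℝ) ((k:ℝ) - (i₁:ℝ) - (i₂:ℝ))) ^ 2 ≤
        (2 * (L:ℝ)) ^ 2 :=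
      sq_le_sq' (by linarith) (by linarith)
    have hqs : q ^ i₂ * s ^ i₃ ≤ q + s := by
      rcases Nat.eq_zero_or_pos i₂ with h2 | h2
      · subst h2
        have h3 : i₃ ≠ 0 := fun h3 => h23 ⟨rfl, h3⟩
        simp only [pow_zero, one_mul]
        calc s ^ i₃ ≤ s := pow_le_of_le_one hs0 hs1 h3
          _ ≤ q + s := by linarith
      · calc q ^ i₂ * s ^ i₃ ≤ q ^ i₂ * 1 :=
            mul_le_mul_of_nonneg_left (pow_le_one₀ hs0 hs1) (by positivity)
          _ = q ^ i₂ := mul_one _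
          _ ≤ q := pow_le_of_le_one hq0 hq1 (by omega)
          _ ≤ q + s := by linarith
    calc p ^ i₁ / (i₁.factorial : ℝ) *
        (q ^ i₂ / (i₂.factorial : ℝ) *
          ((min (i₂:ℝ) ((k:ℝ) - (i₁:ℝ)) - min (i₃:ℝ) ((k:ℝ) - (i₁:ℝ) - (i₂:ℝ))) ^ 2 *
            (s ^ i₃ / (i₃.factorial : ℝ)) *
            (t ^ (L - i₁ - i₂ - i₃) / ((L - i₁ - i₂ - i₃).factorial : ℝ)))) ≤
        1 * (q ^ i₂ * ((2 * (L:ℝ)) ^ 2 * s ^ i₃ * 1)) := by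
          apply mul_le_mul hA _ (by positivity) zero_le_one
          apply mul_le_mul hB _ (by positivity) (by positivity)
          apply mul_le_mul _ hE (by positivity) (by positivity)
          exact mul_le_mul hD hC hC0 (by positivity)
      _ = (2 * (L:ℝ)) ^ 2 * (q ^ i₂ * s ^ i₃) := by ring
      _ ≤ (2 * (L:ℝ)) ^ 2 * (q + s) := mul_le_mul_of_nonneg_left hqs (by positivity)

/-- there is `c_{Z̄} ∈ (0,∞)`, depending only on `L` and `k`, such that for
every `r ∈ 𝒮` and every `j`, `Z̄(j,r) ≤ c_{Z̄}(r_{j−1} + r_j)`. -/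
theorem ZbarR_bound (L k : ℕ) (hL : 1 ≤ L) (hk : 1 ≤ k) (hkL : k ≤ L) :
    ∃ c : ℝ, 0 < c ∧ ∀ r : ℕ → ℝ, memS r → ∀ j : ℕ,
      ZbarR L k j r ≤ c * (prevR r j + r j) := by
  have hk0 : (0:ℝ) < k := by exact_mod_cast hk
  have hL0 : (0:ℝ) < L := by exact_mod_cast hL
  refine ⟨(k : ℝ) * ((L : ℝ) + 1) ^ 2 * (2 * (L : ℝ)) ^ 2, by positivity, ?_⟩
  rintro r ⟨hnn, hsum, htot⟩ j
  have h1 : ∀ i, r i ≤ 1 := by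
    intro i
    calc r i ≤ ∑' m, r m := Summable.le_tsum hsum i (fun m _ => hnn m)
      _ = 1 := htot
  have hp0 : 0 ≤ ∑ m ∈ Finset.range j, r m := Finset.sum_nonneg fun m _ => hnn m
  have hp1 : ∑ m ∈ Finset.range j, r m ≤ 1 := by
    calc ∑ m ∈ Finset.range j, r m ≤ ∑' m, r m :=
        Summable.sum_le_tsum (Finset.range j) (fun m _ => hnn m) hsum
      _ = 1 := htot
  have hq0 : 0 ≤ prevR r j := by cases j with
    | zero => exact le_refl 0
    | succ n => exact hnn n
  have hq1 : prevR r j ≤ 1 := by cases j with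
    | zero => exact zero_le_one
    | succ n => exact h1 n
  have ht0 : 0 ≤ tsumTail r j := tsum_nonneg fun m => hnn _
  have ht1 : tsumTail r j ≤ 1 := by
    have heq : tsumTail r j = ∑' m, r (m + (j + 1)) := by
      unfold tsumTail
      congr 1
      funext m
      rw [add_comm]
    have hkey := Summable.sum_add_tsum_nat_add (f := r) (j + 1) hsum
    have hposs : 0 ≤ ∑ i ∈ Finset.range (j + 1), r i := Finset.sum_nonneg fun m _ => hnn m
    rw [heq]
    rw [htot] at hkey
    linarith
  have hqsnn : (0:ℝ) ≤ prevR r j + r j := by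
    have := hnn j; linarith
  have hB : (0:ℝ) ≤ (2 * (L:ℝ)) ^ 2 * (prevR r j + r j) := mul_nonneg (by positivity) hqsnn
  calc ZbarR L k j r ≤
      ∑ i₁ ∈ Finset.range k, ∑ i₂ ∈ Finset.range (L - i₁ + 1),
        ∑ i₃ ∈ Finset.range (L - i₁ - i₂ + 1), (2 * (L:ℝ)) ^ 2 * (prevR r j + r j) := by
        unfold ZbarR
        apply Finset.sum_le_sum
        intro i₁ hi₁
        rw [Finset.mul_sum]
        apply Finset.sum_le_sum
        intro i₂ hi₂
        rw [Finset.mul_sum, Finset.mul_sum]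
        apply Finset.sum_le_sum
        intro i₃ hi₃
        have hmem₁ : i₁ < k := Finset.mem_range.mp hi₁
        have hmem₂ : i₂ ≤ L - i₁ := by
          have := Finset.mem_range.mp hi₂; omega
        have hmem₃ : i₃ ≤ L - i₁ - i₂ := by
          have := Finset.mem_range.mp hi₃; omega
        have hpt := perTerm L k i₁ i₂ i₃ hkL hmem₁ hmem₂ hmem₃
          (∑ m ∈ Finset.range j, r m) (prevR r j) (r j)
          (tsumTail r j) hp0 hp1 hq0 hq1 (hnn j) (h1 j) ht0 ht1
        calc _ = (∑ m ∈ Finset.range j, r m) ^ i₁ / (i₁.factorial : ℝ) *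
            (prevR r j ^ i₂ / (i₂.factorial : ℝ) *
              (((min i₂ (k - i₁) : ℝ) - (min i₃ (k - i₁ - i₂) : ℝ)) ^ 2 *
                (r j ^ i₃ / (i₃.factorial : ℝ)) *
                (tsumTail r j ^ (L - i₁ - i₂ - i₃) / ((L - i₁ - i₂ - i₃).factorial : ℝ)))) := by
              ring
          _ ≤ (2 * (L : ℝ)) ^ 2 * (prevR r j + r j) := hpt
    _ ≤ ∑ i₁ ∈ Finset.range k,
        ((L:ℝ) + 1) * (((L:ℝ) + 1) * ((2 * (L:ℝ)) ^ 2 * (prevR r j + r j))) := by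
        apply Finset.sum_le_sum
        intro i₁ _
        calc ∑ i₂ ∈ Finset.range (L - i₁ + 1),
              ∑ i₃ ∈ Finset.range (L - i₁ - i₂ + 1), (2 * (L:ℝ)) ^ 2 * (prevR r j + r j) ≤
            ∑ i₂ ∈ Finset.range (L - i₁ + 1),
              ((L:ℝ) + 1) * ((2 * (L:ℝ)) ^ 2 * (prevR r j + r j)) := by
              apply Finset.sum_le_sum
              intro i₂ _
              rw [Finset.sum_const, Finset.card_range, nsmul_eq_mul]
              apply mul_le_mul_of_nonneg_right _ hB
              have h : (L - i₁ - i₂ + 1 : ℕ) ≤ L + 1 := by omega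
              exact_mod_cast h
          _ = ((L - i₁ + 1 : ℕ) : ℝ) *
              (((L:ℝ) + 1) * ((2 * (L:ℝ)) ^ 2 * (prevR r j + r j))) := by
              rw [Finset.sum_const, Finset.card_range, nsmul_eq_mul]
          _ ≤ ((L:ℝ) + 1) * (((L:ℝ) + 1) * ((2 * (L:ℝ)) ^ 2 * (prevR r j + r j))) := by
              apply mul_le_mul_of_nonneg_right _ (mul_nonneg (by positivity) hB)
              have h : (L - i₁ + 1 : ℕ) ≤ L + 1 := by omega
              exact_mod_cast h
    _ = (k : ℝ) * (((L:ℝ) + 1) * (((L:ℝ) + 1) * ((2 * (L:ℝ)) ^ 2 * (prevR r j + r j)))) := by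
        rw [Finset.sum_const, Finset.card_range, nsmul_eq_mul]
    _ = (k : ℝ) * ((L : ℝ) + 1) ^ 2 * (2 * (L : ℝ)) ^ 2 * (prevR r j + r j) := by ring
end
end

section
/- There exists a constant C ∈ (0,∞), depending only on L, k and λ, such that for every r ∈ 𝒮, Σ_{j=0}^∞ ( λ·L!·Z̄(j,r) + k·(r_j + r_{j+1}) ) ≤ C. (This sum is the trace Σ_j ⟨e_j, Φ e_j⟩ of the covariance operator Φ of the limit diffusion evaluated at the state r, so Φ is a trace class operator on ℓ² with trace bounded uniformly over 𝒮.) -/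
noncomputable section

open scoped BigOperators

/-! Auxiliary lemmas -/

lemma coeff_nonneg {x : ℝ} (hx : 0 ≤ x) (n : ℕ) : 0 ≤ x ^ n / (n.factorial : ℝ) := by
  positivity

lemma one_le_fact (n : ℕ) : (1 : ℝ) ≤ (n.factorial : ℝ) := by
  exact_mod_cast Nat.one_le_iff_ne_zero.mpr n.factorial_pos.ne'

lemma coeff_le_one {x : ℝ} (hx0 : 0 ≤ x) (hx1 : x ≤ 1) (n : ℕ) :
    x ^ n / (n.factorial : ℝ) ≤ 1 := by
  have h1 : x ^ n ≤ 1 := pow_le_one₀ hx0 hx1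
  calc x ^ n / (n.factorial : ℝ) ≤ x ^ n := div_le_self (by positivity) (one_le_fact n)
    _ ≤ 1 := h1

lemma coeff_le_self {x : ℝ} (hx0 : 0 ≤ x) (hx1 : x ≤ 1) {n : ℕ} (hn : 1 ≤ n) :
    x ^ n / (n.factorial : ℝ) ≤ x := by
  have h1 : x ^ n ≤ x := by
    calc x ^ n ≤ x ^ 1 := pow_le_pow_of_le_one hx0 hx1 hn
      _ = x := pow_one x
  calc x ^ n / (n.factorial : ℝ) ≤ x ^ n := div_le_self (by positivity) (one_le_fact n)
    _ ≤ x := h1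

lemma sq_min_diff_le (L k i₁ i₂ i₃ : ℕ) (h1 : i₁ ≤ k) (hkL : k ≤ L) (h2 : i₂ ≤ L)
    (h3 : i₃ ≤ L) :
    ((min i₂ (k - i₁) : ℝ) - (min i₃ (k - i₁ - i₂) : ℝ)) ^ 2 ≤ (2 * (L:ℝ)) ^ 2 := by
  have hc1 : (i₁:ℝ) ≤ (k:ℝ) := by exact_mod_cast h1
  have hc2 : (k:ℝ) ≤ (L:ℝ) := by exact_mod_cast hkL
  have hc3 : (i₂:ℝ) ≤ (L:ℝ) := by exact_mod_cast h2
  have hc4 : (i₃:ℝ) ≤ (L:ℝ) := by exact_mod_cast h3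
  have hn2 : (0:ℝ) ≤ (i₂:ℝ) := Nat.cast_nonneg _
  have hn3 : (0:ℝ) ≤ (i₃:ℝ) := Nat.cast_nonneg _
  have hA1 : (min i₂ (k - i₁) : ℝ) ≤ (i₂:ℝ) := min_le_left _ _
  have hA0 : (0:ℝ) ≤ (min i₂ (k - i₁) : ℝ) := le_min hn2 (by linarith)
  have hB1 : (min i₃ (k - i₁ - i₂) : ℝ) ≤ (i₃:ℝ) := min_le_left _ _
  have hB0 : -(L:ℝ) ≤ (min i₃ (k - i₁ - i₂) : ℝ) := le_min (by linarith) (by linarith)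
  exact sq_le_sq' (by linarith) (by linarith)

lemma memS.r_le_one {r : ℕ → ℝ} (hr : memS r) (m : ℕ) : r m ≤ 1 := by
  obtain ⟨h0, hs, ht⟩ := hr
  calc r m ≤ ∑' n, r n := Summable.le_tsum hs m (fun c _ => h0 c)
    _ = 1 := ht

lemma memS.prev_nonneg {r : ℕ → ℝ} (hr : memS r) (j : ℕ) : 0 ≤ prevR r j := by
  cases j with
  | zero => simp [prevR]
  | succ n => exact hr.1 n

lemma memS.prev_le_one {r : ℕ → ℝ} (hr : memS r) (j : ℕ) : prevR r j ≤ 1 := by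
  cases j with
  | zero => simp [prevR]
  | succ n => exact hr.r_le_one n

lemma memS.tail_nonneg {r : ℕ → ℝ} (hr : memS r) (j : ℕ) : 0 ≤ tsumTail r j :=
  tsum_nonneg (fun m => hr.1 _)

lemma memS.tail_le_one {r : ℕ → ℝ} (hr : memS r) (j : ℕ) : tsumTail r j ≤ 1 := by
  obtain ⟨h0, hs, ht⟩ := hr
  calc tsumTail r j ≤ ∑' n, r n :=
        Summable.tsum_le_tsum_of_inj (j+1+·) (fun a b h => by simpa using h) (fun c _ => h0 c)
          (fun b => le_refl _) (hs.comp_injective (fun a b h => by simpa using h)) hs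
    _ = 1 := ht

lemma memS.partial_nonneg {r : ℕ → ℝ} (hr : memS r) (j : ℕ) :
    0 ≤ ∑ m ∈ Finset.range j, r m :=
  Finset.sum_nonneg (fun m _ => hr.1 m)

lemma memS.partial_le_one {r : ℕ → ℝ} (hr : memS r) (j : ℕ) :
    ∑ m ∈ Finset.range j, r m ≤ 1 := by
  obtain ⟨h0, hs, ht⟩ := hr
  calc ∑ m ∈ Finset.range j, r m ≤ ∑' n, r n := Summable.sum_le_tsum _ (fun c _ => h0 c) hs
    _ = 1 := ht

lemma Zbar_nonneg (L k j : ℕ) (r : ℕ → ℝ) (hr : memS r) : 0 ≤ ZbarR L k j r := by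
  unfold ZbarR
  apply Finset.sum_nonneg
  intro i₁ _
  apply mul_nonneg (coeff_nonneg (hr.partial_nonneg j) i₁)
  apply Finset.sum_nonneg
  intro i₂ _
  apply mul_nonneg (coeff_nonneg (hr.prev_nonneg j) i₂)
  apply Finset.sum_nonneg
  intro i₃ _
  exact mul_nonneg (mul_nonneg (sq_nonneg _) (coeff_nonneg (hr.1 j) i₃))
    (coeff_nonneg (hr.tail_nonneg j) _)

lemma Zbar_le (L k j : ℕ) (hkL : k ≤ L) (r : ℕ → ℝ) (hr : memS r) :
    ZbarR L k j r ≤ (k : ℝ) * ((L:ℝ)+1)^2 * (2*(L:ℝ))^2 * (prevR r j + r j) := by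
  have hp0 := hr.prev_nonneg j
  have hp1 := hr.prev_le_one j
  have hq0 := hr.1 j
  have hq1 := hr.r_le_one j
  have ht0 := hr.tail_nonneg j
  have ht1 := hr.tail_le_one j
  have hs0 := hr.partial_nonneg j
  have hs1 := hr.partial_le_one j
  set p := prevR r j with hp
  set q := r j with hq
  set t := tsumTail r j with htdef
  have hLL : (0:ℝ) ≤ ((L:ℝ)+1) * (2*(L:ℝ))^2 := by positivity
  -- bound the middle (i₂-level) summands
  have hinner : ∀ i₁ ∈ Finset.range k, ∀ i₂ ∈ Finset.range (L - i₁ + 1),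
      (p ^ i₂ / (i₂.factorial : ℝ)) *
      ∑ i₃ ∈ Finset.range (L - i₁ - i₂ + 1),
        ((min i₂ (k - i₁) : ℝ) - (min i₃ (k - i₁ - i₂) : ℝ)) ^ 2 *
          (q ^ i₃ / (i₃.factorial : ℝ)) *
          (t ^ (L - i₁ - i₂ - i₃) / ((L - i₁ - i₂ - i₃).factorial : ℝ))
      ≤ ((L:ℝ)+1) * (2*(L:ℝ))^2 * (p + q) := by
    intro i₁ h₁ i₂ h₂
    have hi₁k : i₁ ≤ k := le_of_lt (Finset.mem_range.mp h₁)
    have hi₂L : i₂ ≤ L := by have := Finset.mem_range.mp h₂; omega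
    have hsum_nonneg : (0:ℝ) ≤ ∑ i₃ ∈ Finset.range (L - i₁ - i₂ + 1),
        ((min i₂ (k - i₁) : ℝ) - (min i₃ (k - i₁ - i₂) : ℝ)) ^ 2 *
          (q ^ i₃ / (i₃.factorial : ℝ)) *
          (t ^ (L - i₁ - i₂ - i₃) / ((L - i₁ - i₂ - i₃).factorial : ℝ)) := by
      apply Finset.sum_nonneg
      intro i₃ _
      exact mul_nonneg (mul_nonneg (sq_nonneg _) (coeff_nonneg hq0 _)) (coeff_nonneg ht0 _)
    rcases Nat.eq_zero_or_pos i₂ with h2 | h2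
    · -- i₂ = 0 : every nonzero i₃-term carries a factor q
      subst h2
      have hsum : ∑ i₃ ∈ Finset.range (L - i₁ - 0 + 1),
          ((min (0:ℕ) (k - i₁) : ℝ) - (min i₃ (k - i₁ - (0:ℕ)) : ℝ)) ^ 2 *
            (q ^ i₃ / (i₃.factorial : ℝ)) *
            (t ^ (L - i₁ - 0 - i₃) / ((L - i₁ - 0 - i₃).factorial : ℝ))
          ≤ ((L:ℝ)+1) * ((2*(L:ℝ))^2 * q) := by
        calc _ ≤ ∑ _i₃ ∈ Finset.range (L - i₁ - 0 + 1), (2*(L:ℝ))^2 * q := by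
              apply Finset.sum_le_sum
              intro i₃ h₃
              have hi₃L : i₃ ≤ L := by have := Finset.mem_range.mp h₃; omega
              rcases Nat.eq_zero_or_pos i₃ with h3 | h3
              · subst h3
                simp only [Nat.cast_zero, Nat.sub_zero, sub_zero]
                rw [sub_self]
                simp only [ne_eq, OfNat.ofNat_ne_zero, not_false_eq_true, zero_pow, zero_mul]
                positivity
              · have hc := sq_min_diff_le L k i₁ 0 i₃ hi₁k hkL (by omega) hi₃L
                calc ((min (0:ℕ) (k - i₁) : ℝ) - (min i₃ (k - i₁ - (0:ℕ)) : ℝ)) ^ 2 *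
                      (q ^ i₃ / (i₃.factorial : ℝ)) *
                      (t ^ (L - i₁ - 0 - i₃) / ((L - i₁ - 0 - i₃).factorial : ℝ))
                    ≤ (2*(L:ℝ))^2 * q * 1 := by
                      apply mul_le_mul _ (coeff_le_one ht0 ht1 _) (coeff_nonneg ht0 _)
                        (by positivity)
                      exact mul_le_mul hc (coeff_le_self hq0 hq1 h3) (coeff_nonneg hq0 _)
                        (by positivity)
                  _ = (2*(L:ℝ))^2 * q := by ring
          _ = ((L - i₁ - 0 + 1 : ℕ):ℝ) * ((2*(L:ℝ))^2 * q) := by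
              rw [Finset.sum_const, Finset.card_range, nsmul_eq_mul]
          _ ≤ ((L:ℝ)+1) * ((2*(L:ℝ))^2 * q) := by
              apply mul_le_mul_of_nonneg_right _ (by positivity)
              have h := (by omega : L - i₁ - 0 + 1 ≤ L + 1)
              calc ((L - i₁ - 0 + 1 : ℕ):ℝ) ≤ ((L + 1 : ℕ):ℝ) := by exact_mod_cast h
                _ = (L:ℝ) + 1 := by push_cast; ring
      have hfinal : (p ^ 0 / ((0:ℕ).factorial : ℝ)) *
          (∑ i₃ ∈ Finset.range (L - i₁ - 0 + 1),
            ((min (0:ℕ) (k - i₁) : ℝ) - (min i₃ (k - i₁ - (0:ℕ)) : ℝ)) ^ 2 *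
              (q ^ i₃ / (i₃.factorial : ℝ)) *
              (t ^ (L - i₁ - 0 - i₃) / ((L - i₁ - 0 - i₃).factorial : ℝ)))
          ≤ ((L:ℝ)+1) * (2*(L:ℝ))^2 * (p + q) := by
        calc (p ^ 0 / ((0:ℕ).factorial : ℝ)) * _
            ≤ 1 * (((L:ℝ)+1) * ((2*(L:ℝ))^2 * q)) :=
              mul_le_mul (coeff_le_one hp0 hp1 0) hsum (by simpa using hsum_nonneg)
                (by norm_num)
          _ = ((L:ℝ)+1) * (2*(L:ℝ))^2 * q := by ring
          _ ≤ ((L:ℝ)+1) * (2*(L:ℝ))^2 * (p + q) := by nlinarith [mul_nonneg hLL hp0]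
      simpa using hfinal
    · -- i₂ ≥ 1 : the outer factor carries p
      have hsum : ∑ i₃ ∈ Finset.range (L - i₁ - i₂ + 1),
          ((min i₂ (k - i₁) : ℝ) - (min i₃ (k - i₁ - i₂) : ℝ)) ^ 2 *
            (q ^ i₃ / (i₃.factorial : ℝ)) *
            (t ^ (L - i₁ - i₂ - i₃) / ((L - i₁ - i₂ - i₃).factorial : ℝ))
          ≤ ((L:ℝ)+1) * (2*(L:ℝ))^2 := by
        calc _ ≤ ∑ _i₃ ∈ Finset.range (L - i₁ - i₂ + 1), (2*(L:ℝ))^2 := by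
              apply Finset.sum_le_sum
              intro i₃ h₃
              have hi₃L : i₃ ≤ L := by have := Finset.mem_range.mp h₃; omega
              have hc := sq_min_diff_le L k i₁ i₂ i₃ hi₁k hkL hi₂L hi₃L
              calc ((min i₂ (k - i₁) : ℝ) - (min i₃ (k - i₁ - i₂) : ℝ)) ^ 2 *
                    (q ^ i₃ / (i₃.factorial : ℝ)) *
                    (t ^ (L - i₁ - i₂ - i₃) / ((L - i₁ - i₂ - i₃).factorial : ℝ))
                  ≤ (2*(L:ℝ))^2 * 1 * 1 := by
                    apply mul_le_mul _ (coeff_le_one ht0 ht1 _) (coeff_nonneg ht0 _)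
                      (by positivity)
                    exact mul_le_mul hc (coeff_le_one hq0 hq1 _) (coeff_nonneg hq0 _)
                      (by positivity)
                _ = (2*(L:ℝ))^2 := by ring
          _ = ((L - i₁ - i₂ + 1 : ℕ):ℝ) * (2*(L:ℝ))^2 := by
              rw [Finset.sum_const, Finset.card_range, nsmul_eq_mul]
          _ ≤ ((L:ℝ)+1) * (2*(L:ℝ))^2 := by
              apply mul_le_mul_of_nonneg_right _ (by positivity)
              have h := (by omega : L - i₁ - i₂ + 1 ≤ L + 1)
              calc ((L - i₁ - i₂ + 1 : ℕ):ℝ) ≤ ((L + 1 : ℕ):ℝ) := by exact_mod_cast h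
                _ = (L:ℝ) + 1 := by push_cast; ring
      calc (p ^ i₂ / (i₂.factorial : ℝ)) * _
          ≤ p * (((L:ℝ)+1) * (2*(L:ℝ))^2) :=
            mul_le_mul (coeff_le_self hp0 hp1 h2) hsum hsum_nonneg hp0
        _ ≤ ((L:ℝ)+1) * (2*(L:ℝ))^2 * (p + q) := by nlinarith [mul_nonneg hLL hq0]
  -- outer (i₁-level) bound
  have houter : ∀ i₁ ∈ Finset.range k,
      ((∑ m ∈ Finset.range j, r m) ^ i₁ / (i₁.factorial : ℝ)) *
      (∑ i₂ ∈ Finset.range (L - i₁ + 1), (p ^ i₂ / (i₂.factorial : ℝ)) *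
        ∑ i₃ ∈ Finset.range (L - i₁ - i₂ + 1),
          ((min i₂ (k - i₁) : ℝ) - (min i₃ (k - i₁ - i₂) : ℝ)) ^ 2 *
            (q ^ i₃ / (i₃.factorial : ℝ)) *
            (t ^ (L - i₁ - i₂ - i₃) / ((L - i₁ - i₂ - i₃).factorial : ℝ)))
      ≤ ((L:ℝ)+1) * (((L:ℝ)+1) * (2*(L:ℝ))^2 * (p + q)) := by
    intro i₁ h₁
    have hpq : (0:ℝ) ≤ p + q := by linarith
    have hmid : ∑ i₂ ∈ Finset.range (L - i₁ + 1), (p ^ i₂ / (i₂.factorial : ℝ)) *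
        ∑ i₃ ∈ Finset.range (L - i₁ - i₂ + 1),
          ((min i₂ (k - i₁) : ℝ) - (min i₃ (k - i₁ - i₂) : ℝ)) ^ 2 *
            (q ^ i₃ / (i₃.factorial : ℝ)) *
            (t ^ (L - i₁ - i₂ - i₃) / ((L - i₁ - i₂ - i₃).factorial : ℝ))
        ≤ ((L:ℝ)+1) * (((L:ℝ)+1) * (2*(L:ℝ))^2 * (p + q)) := by
      calc _ ≤ ∑ _i₂ ∈ Finset.range (L - i₁ + 1), ((L:ℝ)+1) * (2*(L:ℝ))^2 * (p + q) :=
            Finset.sum_le_sum (fun i₂ h₂ => hinner i₁ h₁ i₂ h₂)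
        _ = ((L - i₁ + 1 : ℕ):ℝ) * (((L:ℝ)+1) * (2*(L:ℝ))^2 * (p + q)) := by
            rw [Finset.sum_const, Finset.card_range, nsmul_eq_mul]
        _ ≤ ((L:ℝ)+1) * (((L:ℝ)+1) * (2*(L:ℝ))^2 * (p + q)) := by
            apply mul_le_mul_of_nonneg_right _ (mul_nonneg hLL hpq)
            have h := (by omega : L - i₁ + 1 ≤ L + 1)
            calc ((L - i₁ + 1 : ℕ):ℝ) ≤ ((L + 1 : ℕ):ℝ) := by exact_mod_cast h
              _ = (L:ℝ) + 1 := by push_cast; ring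
    have hmid_nonneg : (0:ℝ) ≤ ∑ i₂ ∈ Finset.range (L - i₁ + 1),
        (p ^ i₂ / (i₂.factorial : ℝ)) *
        ∑ i₃ ∈ Finset.range (L - i₁ - i₂ + 1),
          ((min i₂ (k - i₁) : ℝ) - (min i₃ (k - i₁ - i₂) : ℝ)) ^ 2 *
            (q ^ i₃ / (i₃.factorial : ℝ)) *
            (t ^ (L - i₁ - i₂ - i₃) / ((L - i₁ - i₂ - i₃).factorial : ℝ)) := by
      apply Finset.sum_nonneg
      intro i₂ _
      apply mul_nonneg (coeff_nonneg hp0 i₂)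
      apply Finset.sum_nonneg
      intro i₃ _
      exact mul_nonneg (mul_nonneg (sq_nonneg _) (coeff_nonneg hq0 _)) (coeff_nonneg ht0 _)
    calc ((∑ m ∈ Finset.range j, r m) ^ i₁ / (i₁.factorial : ℝ)) * _
        ≤ 1 * (((L:ℝ)+1) * (((L:ℝ)+1) * (2*(L:ℝ))^2 * (p + q))) :=
          mul_le_mul (coeff_le_one hs0 hs1 i₁) hmid hmid_nonneg (by norm_num)
      _ = ((L:ℝ)+1) * (((L:ℝ)+1) * (2*(L:ℝ))^2 * (p + q)) := by ring
  unfold ZbarR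
  refine le_trans (Finset.sum_le_sum houter) ?_
  rw [Finset.sum_const, Finset.card_range, nsmul_eq_mul]
  apply le_of_eq
  ring

/-- there is `C ∈ (0,∞)`, depending only on `L`, `k`, `λ`, such that for
every `r ∈ 𝒮`, `Σ_j (λ·L!·Z̄(j,r) + k·(r_j + r_{j+1})) ≤ C`; this sum is the trace of the
covariance operator `Φ` of the limit diffusion at state `r`. -/
theorem trace_bound (L k : ℕ) (hL : 1 ≤ L) (hk : 1 ≤ k) (hkL : k ≤ L)
    (lam : ℝ) (hlam : 0 < lam) :
    ∃ C : ℝ, 0 < C ∧ ∀ r : ℕ → ℝ, memS r →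
      Summable (fun j => lam * (L.factorial : ℝ) * ZbarR L k j r
        + (k : ℝ) * (r j + r (j + 1))) ∧
      (∑' j, (lam * (L.factorial : ℝ) * ZbarR L k j r
        + (k : ℝ) * (r j + r (j + 1)))) ≤ C := by
  set M : ℝ := (k : ℝ) * ((L:ℝ)+1)^2 * (2*(L:ℝ))^2 with hM
  set A : ℝ := lam * (L.factorial : ℝ) * M with hA
  have hk' : (0:ℝ) < (k:ℝ) := by exact_mod_cast hk
  have hL' : (0:ℝ) < (L:ℝ) := by exact_mod_cast hL
  have hfac : (0:ℝ) < (L.factorial : ℝ) := by exact_mod_cast L.factorial_pos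
  have hMpos : 0 < M := by positivity
  have hApos : 0 < A := by positivity
  refine ⟨2*A + 2*(k:ℝ), by linarith, ?_⟩
  intro r hr
  have h1 : Summable (prevR r) := by
    apply (summable_nat_add_iff 1).mp
    simpa [prevR] using hr.2.1
  have h2 : Summable (fun n => r (n+1)) := (summable_nat_add_iff 1).mpr hr.2.1
  have hTp : ∑' n, prevR r n = 1 := by
    rw [Summable.tsum_eq_zero_add h1]
    simpa [prevR] using hr.2.2
  have hT1 : ∑' n, r (n+1) ≤ 1 := by
    rw [← hr.2.2]
    exact Summable.tsum_le_tsum_of_inj (·+1) (fun a b h => by simpa using h) (fun c _ => hr.1 c)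
      (fun b => le_refl _) h2 hr.2.1
  set g : ℕ → ℝ := fun j => A * prevR r j + A * r j + ((k:ℝ) * r j + (k:ℝ) * r (j+1))
    with hg
  have S1 : Summable (fun j => A * prevR r j) := h1.mul_left A
  have S2 : Summable (fun j => A * r j) := hr.2.1.mul_left A
  have S3 : Summable (fun j => (k:ℝ) * r j) := hr.2.1.mul_left _
  have S4 : Summable (fun j => (k:ℝ) * r (j+1)) := h2.mul_left _
  have hgsum : Summable g := ((S1.add S2).add (S3.add S4))
  have hfg : ∀ j, lam * (L.factorial : ℝ) * ZbarR L k j r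
      + (k : ℝ) * (r j + r (j + 1)) ≤ g j := by
    intro j
    have hZ := Zbar_le L k j hkL r hr
    have hmul : lam * (L.factorial : ℝ) * ZbarR L k j r
        ≤ lam * (L.factorial : ℝ) * (M * (prevR r j + r j)) := by
      apply mul_le_mul_of_nonneg_left _ (by positivity)
      simpa [hM, mul_assoc] using hZ
    have hAe : lam * (L.factorial : ℝ) * (M * (prevR r j + r j))
        = A * prevR r j + A * r j := by rw [hA]; ring
    simp only [hg]
    linarith
  have hf0 : ∀ j, 0 ≤ lam * (L.factorial : ℝ) * ZbarR L k j r
      + (k : ℝ) * (r j + r (j + 1)) := by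
    intro j
    have hZ0 := Zbar_nonneg L k j r hr
    have := hr.1 j
    have := hr.1 (j+1)
    have h01 : 0 ≤ lam * (L.factorial : ℝ) * ZbarR L k j r := by positivity
    nlinarith
  have hfsum : Summable (fun j => lam * (L.factorial : ℝ) * ZbarR L k j r
      + (k : ℝ) * (r j + r (j + 1))) :=
    Summable.of_nonneg_of_le hf0 hfg hgsum
  refine ⟨hfsum, ?_⟩
  calc (∑' j, (lam * (L.factorial : ℝ) * ZbarR L k j r + (k : ℝ) * (r j + r (j + 1))))
      ≤ ∑' j, g j := Summable.tsum_le_tsum hfg hfsum hgsum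
    _ = A * (∑' n, prevR r n) + A * (∑' n, r n) +
        ((k:ℝ) * (∑' n, r n) + (k:ℝ) * (∑' n, r (n+1))) := by
        rw [hg, Summable.tsum_add (S1.add S2) (S3.add S4), Summable.tsum_add S1 S2, Summable.tsum_add S3 S4,
          tsum_mul_left, tsum_mul_left, tsum_mul_left, tsum_mul_left]
    _ ≤ 2*A + 2*(k:ℝ) := by
        rw [hTp, hr.2.2]
        have : (k:ℝ) * (∑' n, r (n+1)) ≤ (k:ℝ) * 1 :=
          mul_le_mul_of_nonneg_left hT1 (le_of_lt hk')
        linarith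
end
end
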